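/- Let a, b > 1 and let ψ : ℕ → ℝ⁺ satisfy ∑_{n=1}^∞ 1/ψ(n) < ∞. Then there exists ω : ℕ → ℝ⁺ with ∑_{n=1}^∞ 1/ω(n) < ∞ such that ω(⌊log_b n⌋) ≤ ψ(⌊log_a n⌋) for all n. -/

import Mathlib

/-!
Put `c = log_a b`, so that `log_a n = c · log_b n`. If `⌊log_b n⌋ = m`, then `⌊log_a n⌋` lies in
the block `[⌊c m⌋, ⌊c (m + 1)⌋]`, so `ω(m) := (∑_{k in block m} 1/ψ(k))⁻¹` satisfies the inequality.
Each `k` lies in at most `⌈1/c + 1⌉` blocks, hence `∑ 1/ω(m) ≤ ⌈1/c + 1⌉ · ∑ 1/ψ(k) < ∞`.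
-/

open Finset

theorem Summable.sum_finset_of_card_fiber_le {ι κ : Type*} {f : κ → ℝ} (hf0 : ∀ k, 0 ≤ f k)
    (hf : Summable f) (R : ι → Finset κ) (N : ℕ)
    (hR : ∀ k (s : Finset ι), (∀ i ∈ s, k ∈ R i) → #s ≤ N) :
    Summable fun i => ∑ k ∈ R i, f k := by
  classical
  refine summable_of_sum_le (c := N * ∑' k, f k) (fun i => sum_nonneg fun k _ => hf0 k) fun u => ?_
  calc ∑ i ∈ u, ∑ k ∈ R i, f k
      = ∑ k ∈ u.biUnion R, ∑ i ∈ u with k ∈ R i, f k :=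
        sum_comm' fun i k => by
          simp only [mem_biUnion, mem_filter]; exact ⟨fun h => ⟨h, i, h⟩, fun h => h.1⟩
    _ = ∑ k ∈ u.biUnion R, #{i ∈ u | k ∈ R i} * f k := by simp only [sum_const, nsmul_eq_mul]
    _ ≤ ∑ k ∈ u.biUnion R, N * f k := by
        gcongr with k
        · exact hf0 k
        · exact hR k _ fun i hi => (mem_filter.1 hi).2
    _ = N * ∑ k ∈ u.biUnion R, f k := (mul_sum ..).symm
    _ ≤ N * ∑' k, f k := by gcongr; exact hf.sum_le_tsum _ fun k _ => hf0 k

theorem Nat.card_le_ceil_of_forall_mem_Ico {s : Finset ℕ} {x L : ℝ}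
    (hs : ∀ m ∈ s, x ≤ m ∧ (m : ℝ) < x + L) : #s ≤ ⌈L⌉₊ := by
  have hsub : s ⊆ Ico ⌈x⌉₊ ⌈x + L⌉₊ := fun m hm =>
    mem_Ico.2 ⟨Nat.ceil_le.2 (hs m hm).1, Nat.lt_ceil.2 (hs m hm).2⟩
  have := card_le_card hsub
  have := Nat.ceil_add_le x L
  rw [Nat.card_Ico] at *
  omega

noncomputable def scaledBlock (c : ℝ) (m : ℕ) : Finset ℕ := Icc ⌊c * m⌋₊ ⌊c * (m + 1)⌋₊

section scaledBlock

variable {c : ℝ}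

theorem scaledBlock_nonempty (hc : 0 ≤ c) (m : ℕ) : (scaledBlock c m).Nonempty :=
  nonempty_Icc.2 <| Nat.floor_le_floor <| by gcongr; linarith

theorem floor_mul_mem_scaledBlock (hc : 0 ≤ c) {x : ℝ} (hx : 0 ≤ x) :
    ⌊c * x⌋₊ ∈ scaledBlock c ⌊x⌋₊ :=
  mem_Icc.2 ⟨Nat.floor_le_floor <| by gcongr; exact Nat.floor_le hx,
    Nat.floor_le_floor <| by gcongr; exact (Nat.lt_floor_add_one x).le⟩

theorem bounds_of_mem_scaledBlock (hc : 0 < c) {k m : ℕ} (h : k ∈ scaledBlock c m) :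
    k / c - 1 ≤ m ∧ (m : ℝ) < (k + 1) / c := by
  obtain ⟨hlo, hhi⟩ := mem_Icc.1 h
  have hk : (k : ℝ) ≤ c * (m + 1) :=
    (Nat.cast_le.2 hhi).trans (Nat.floor_le (by positivity))
  have hm : c * m < k + 1 :=
    (Nat.lt_floor_add_one _).trans_le (by exact_mod_cast Nat.add_le_add_right hlo 1)
  constructor
  · rw [sub_le_iff_le_add, div_le_iff₀ hc]; linarith
  · rw [lt_div_iff₀ hc]; linarith

theorem card_le_of_forall_mem_scaledBlock (hc : 0 < c) {k : ℕ} {s : Finset ℕ}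
    (hs : ∀ m ∈ s, k ∈ scaledBlock c m) : #s ≤ ⌈1 / c + 1⌉₊ := by
  refine Nat.card_le_ceil_of_forall_mem_Ico (x := k / c - 1) fun m hm => ?_
  obtain ⟨hlo, hhi⟩ := bounds_of_mem_scaledBlock hc (hs m hm)
  exact ⟨hlo, by convert hhi using 1; ring⟩

end scaledBlock

/-- If `ψ : ℕ → ℝ⁺` satisfies `∑ 1/ψ(n) < ∞` and `a, b > 1`, then there exists
`ω : ℕ → ℝ⁺` with `∑ 1/ω(n) < ∞` such that `ω(⌊log_b n⌋) ≤ ψ(⌊log_a n⌋)` for all `n ≥ 1`. -/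
theorem psi_change_of_base
    {a b : ℝ} (ha : 1 < a) (hb : 1 < b)
    {ψ : ℕ → ℝ} (hψpos : ∀ n, 0 < ψ n) (hψ : Summable fun n => 1 / ψ n) :
    ∃ ω : ℕ → ℝ, (∀ n, 0 < ω n) ∧ (Summable fun n => 1 / ω n) ∧
      ∀ n : ℕ, 1 ≤ n → ω ⌊Real.logb b n⌋₊ ≤ ψ ⌊Real.logb a n⌋₊ := by
  set c := Real.logb a b
  have hc : 0 < c := Real.logb_pos ha hb
  have hinv : ∀ k, 0 < 1 / ψ k := fun k => one_div_pos.2 (hψpos k)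
  have hS : ∀ m, 0 < ∑ k ∈ scaledBlock c m, 1 / ψ k := fun m =>
    sum_pos (fun k _ => hinv k) (scaledBlock_nonempty hc.le m)
  refine ⟨fun m => (∑ k ∈ scaledBlock c m, 1 / ψ k)⁻¹, fun m => inv_pos.2 (hS m), ?_, ?_⟩
  · simpa only [one_div, inv_inv] using hψ.sum_finset_of_card_fiber_le (fun k => (hinv k).le)
      (scaledBlock c) _ fun k s => card_le_of_forall_mem_scaledBlock hc
  · intro n hn
    have hlogb : Real.logb a n = c * Real.logb b n :=
      (Real.mul_logb (by positivity) hb.ne' (by linarith)).symm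
    have hmem : ⌊Real.logb a n⌋₊ ∈ scaledBlock c ⌊Real.logb b n⌋₊ := by
      rw [hlogb]
      exact floor_mul_mem_scaledBlock hc.le (Real.logb_nonneg hb (by exact_mod_cast hn))
    calc (∑ k ∈ scaledBlock c ⌊Real.logb b n⌋₊, 1 / ψ k)⁻¹
        ≤ (1 / ψ ⌊Real.logb a n⌋₊)⁻¹ :=
          inv_anti₀ (hinv _) (single_le_sum (fun k _ => (hinv k).le) hmem)
      _ = ψ ⌊Real.logb a n⌋₊ := by rw [one_div, inv_inv]
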